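/- arXiv:1901.08665 — 6 statements merged into one kernel-verified Lean document; each statement's English description precedes it below -/
import Mathlib

section
/- Let n ≥ 1 and let R : (Fin n → ℝ) → ℝ be a regular measure of risk. Then the functional D defined by D(Z) := R(Z) − E(Z) is a regular measure of deviation: D is convex, lower semicontinuous, D(Z) ≥ 0 for all Z, and D(Z) = 0 if and only if Z is constant. -/
/-!
Subtracting the expectation, which is linear and continuous, preserves convexity and lower
semicontinuity. Since the expectation of a constant is that constant, `F8` makes `D` vanish on
constants, and aversity `F6` makes it strictly positive everywhere else.
-/

open Set

theorem convexOn_univ_iff_forall_mem_Ioo {E : Type*} [AddCommGroup E] [Module ℝ E]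
    {f : E → ℝ} :
    ConvexOn ℝ univ f ↔ ∀ x y : E, ∀ l : ℝ, 0 < l → l < 1 →
      f ((1 - l) • x + l • y) ≤ (1 - l) * f x + l * f y := by
  rw [convexOn_iff_forall_pos]
  refine ⟨fun h x y l hl0 hl1 => h.2 (mem_univ x) (mem_univ y) (sub_pos.2 hl1) hl0 (by ring),
    fun h => ⟨convex_univ, fun x _ y _ a b ha hb hab => ?_⟩⟩
  obtain rfl : a = 1 - b := by linarith
  exact h x y b hb (by linarith)

theorem LowerSemicontinuous.sub_continuous {α : Type*} [TopologicalSpace α] {f g : α → ℝ}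
    (hf : LowerSemicontinuous f) (hg : Continuous g) :
    LowerSemicontinuous fun x => f x - g x := by
  simpa only [sub_eq_add_neg] using hf.add (g := fun x => -g x) hg.neg.lowerSemicontinuous

noncomputable def mean (n : ℕ) : (Fin n → ℝ) →ₗ[ℝ] ℝ :=
  (n : ℝ)⁻¹ • ∑ i, LinearMap.proj i

theorem mean_apply (n : ℕ) (Z : Fin n → ℝ) : mean n Z = (∑ i, Z i) / n := by
  simp [mean, div_eq_inv_mul]

theorem mean_const {n : ℕ} (hn : n ≠ 0) (c : ℝ) : mean n (fun _ => c) = c := by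
  rw [mean_apply, Finset.sum_const, Finset.card_univ, Fintype.card_fin, nsmul_eq_mul,
    mul_div_cancel_left₀ c (Nat.cast_ne_zero.2 hn)]

/-- if `R` is a regular measure of risk (F1, F4, F6, F8), then
`D(Z) := R(Z) − E(Z)` is a regular measure of deviation (F1, F4, F9). -/
theorem regular_risk_gives_regular_deviation (n : ℕ) (hn : 1 ≤ n)
    (R : (Fin n → ℝ) → ℝ)
    (F1 : ∀ Z Z' : Fin n → ℝ, ∀ l : ℝ, 0 < l → l < 1 →
      R ((1 - l) • Z + l • Z') ≤ (1 - l) * R Z + l * R Z')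
    (F4 : LowerSemicontinuous R)
    (F6 : ∀ Z : Fin n → ℝ, (¬ ∃ c : ℝ, ∀ i, Z i = c) → (∑ i, Z i) / n < R Z)
    (F8 : ∀ c : ℝ, R (fun _ => c) = c)
    (D : (Fin n → ℝ) → ℝ)
    (hD : ∀ Z : Fin n → ℝ, D Z = R Z - (∑ i, Z i) / n) :
    (∀ Z Z' : Fin n → ℝ, ∀ l : ℝ, 0 < l → l < 1 →
      D ((1 - l) • Z + l • Z') ≤ (1 - l) * D Z + l * D Z') ∧
    LowerSemicontinuous D ∧
    (∀ Z : Fin n → ℝ, 0 ≤ D Z) ∧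
    (∀ Z : Fin n → ℝ, D Z = 0 ↔ ∃ c : ℝ, ∀ i, Z i = c) := by
  obtain rfl : D = fun Z => R Z - mean n Z := funext fun Z => by rw [hD, mean_apply]
  have zero_of_const : ∀ Z : Fin n → ℝ, (∃ c : ℝ, ∀ i, Z i = c) → R Z - mean n Z = 0 := by
    rintro Z ⟨c, hc⟩
    obtain rfl : Z = fun _ => c := funext hc
    rw [F8, mean_const (by omega), sub_self]
  have pos_of_not_const : ∀ Z : Fin n → ℝ, (¬ ∃ c : ℝ, ∀ i, Z i = c) → 0 < R Z - mean n Z :=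
    fun Z hZ => sub_pos.2 (mean_apply n Z ▸ F6 Z hZ)
  refine ⟨convexOn_univ_iff_forall_mem_Ioo.1
      ((convexOn_univ_iff_forall_mem_Ioo.2 F1).sub ((mean n).concaveOn convex_univ)),
    F4.sub_continuous (mean n).continuous_of_finiteDimensional, fun Z => ?_, fun Z => ?_⟩
  · by_cases hZ : ∃ c : ℝ, ∀ i, Z i = c
    · exact (zero_of_const Z hZ).ge
    · exact (pos_of_not_const Z hZ).le
  · exact ⟨fun h0 => by_contra fun hZ => (pos_of_not_const Z hZ).ne' h0, zero_of_const Z⟩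
end

section
/- Let n ≥ 1, let D : (Fin n → ℝ) → ℝ be a regular measure of deviation, and define R(Z) := E(Z) + D(Z). Then R is monotonic (R(Z) ≤ R(Z') whenever Z i ≤ Z' i for all i) if and only if D(Z) ≤ (maxᵢ Z i) − E(Z) for every Z : Fin n → ℝ. -/
/-!
Write `R Z = 𝔼 Z + D Z`. If `R` is monotone, comparing `Z` with the constant `max Z` (on which
`D` vanishes) gives `R Z ≤ max Z`, which is the bound. Conversely, the bound says `R ≤ max`, and
`R` is convex. For `Z ≤ Z'` the ray from `Z'` through `Z` stays below `Z'`, so `R` is bounded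
above by `max Z'` on it; a convex function bounded above on a ray cannot increase along it,
hence `R Z ≤ R Z'`.
-/

open Set Filter Topology
open scoped BigOperators

lemma le_of_forall_mem_Ioo_le_one_sub_mul_add_mul {a b M : ℝ}
    (h : ∀ l ∈ Ioo (0 : ℝ) 1, a ≤ (1 - l) * b + l * M) : a ≤ b := by
  have hlim : Tendsto (fun l : ℝ => (1 - l) * b + l * M) (𝓝[>] 0) (𝓝 b) :=
    ((by fun_prop : Continuous fun l : ℝ => (1 - l) * b + l * M).tendsto' 0 b
      (by simp)).mono_left nhdsWithin_le_nhds
  refine ge_of_tendsto hlim ?_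
  filter_upwards [Ioo_mem_nhdsGT (zero_lt_one' ℝ)] with l hl
  exact h l hl

section

variable {E : Type*} [AddCommGroup E] [Module ℝ E]

theorem ConvexOn.le_of_le_on_ray {f : E → ℝ} (hf : ConvexOn ℝ univ f) {x y : E} {M : ℝ}
    (hM : ∀ s : ℝ, 1 ≤ s → f (x + s • (y - x)) ≤ M) : f y ≤ f x := by
  refine le_of_forall_mem_Ioo_le_one_sub_mul_add_mul (M := M) fun l ⟨hl0, hl1⟩ => ?_
  have hy : (1 - l) • x + l • (x + l⁻¹ • (y - x)) = y := by
    rw [smul_add, smul_smul, mul_inv_cancel₀ hl0.ne', one_smul]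
    module
  calc f y = f ((1 - l) • x + l • (x + l⁻¹ • (y - x))) := by rw [hy]
    _ ≤ (1 - l) • f x + l • f (x + l⁻¹ • (y - x)) :=
        hf.2 trivial trivial (by linarith) hl0.le (by ring)
    _ ≤ (1 - l) * f x + l * M := by
        simp only [smul_eq_mul]
        gcongr
        exact hM _ (one_le_inv₀ hl0 |>.2 hl1.le)

end

section

variable {ι : Type*} [Fintype ι] {D : (ι → ℝ) → ℝ}

theorem convexOn_expect_add (hD : ConvexOn ℝ univ D) :
    ConvexOn ℝ univ fun Z : ι → ℝ => 𝔼 i, Z i + D Z := by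
  refine ConvexOn.add ⟨convex_univ, fun Z _ Z' _ a b _ _ _ => le_of_eq ?_⟩ hD
  simp only [Pi.add_apply, Pi.smul_apply, Finset.expect_add_distrib, Finset.smul_expect]

theorem deviation_le_iSup_sub_expect_of_monotone [Nonempty ι]
    (hconst : ∀ c : ℝ, D (fun _ => c) = 0) (hmono : Monotone fun Z : ι → ℝ => 𝔼 i, Z i + D Z)
    (Z : ι → ℝ) : D Z ≤ (⨆ i, Z i) - 𝔼 i, Z i := by
  have hle : Z ≤ fun _ => ⨆ i, Z i := fun i => le_ciSup (Finite.bddAbove_range Z) i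
  have := hmono hle
  simp only [Fintype.expect_const, hconst] at this
  linarith

theorem monotone_expect_add_of_deviation_le (hD : ConvexOn ℝ univ D)
    (hbound : ∀ Z : ι → ℝ, D Z ≤ (⨆ i, Z i) - 𝔼 i, Z i) :
    Monotone fun Z : ι → ℝ => 𝔼 i, Z i + D Z := by
  intro Z Z' hZZ'
  refine (convexOn_expect_add hD).le_of_le_on_ray (M := ⨆ i, Z' i) fun s hs => ?_
  set W := Z' + s • (Z - Z')
  have hW : W ≤ Z' := fun i => by
    have := mul_nonpos_of_nonneg_of_nonpos (zero_le_one.trans hs) (sub_nonpos.2 (hZZ' i))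
    simp only [W, Pi.add_apply, Pi.smul_apply, Pi.sub_apply, smul_eq_mul]
    linarith
  have hsup : (⨆ i, W i) ≤ ⨆ i, Z' i := ciSup_mono (Finite.bddAbove_range _) hW
  linarith [hbound W]

end

theorem risk_monotone_iff_deviation_bounded_general (n : ℕ) (hn : 1 ≤ n)
    (D : (Fin n → ℝ) → ℝ)
    (F1 : ∀ Z Z' : Fin n → ℝ, ∀ l : ℝ, 0 < l → l < 1 →
      D ((1 - l) • Z + l • Z') ≤ (1 - l) * D Z + l * D Z')
    (F9b : ∀ Z : Fin n → ℝ, D Z = 0 ↔ ∃ c : ℝ, ∀ i, Z i = c)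
    (R : (Fin n → ℝ) → ℝ)
    (hR : ∀ Z : Fin n → ℝ, R Z = (∑ i, Z i) / n + D Z) :
    (∀ Z Z' : Fin n → ℝ, (∀ i, Z i ≤ Z' i) → R Z ≤ R Z') ↔
    (∀ Z : Fin n → ℝ, D Z ≤ (⨆ i, Z i) - (∑ i, Z i) / n) := by
  have : Nonempty (Fin n) := ⟨⟨0, hn⟩⟩
  have hmean (Z : Fin n → ℝ) : (∑ i, Z i) / n = 𝔼 i, Z i := by
    rw [Fintype.expect_eq_sum_div_card, Fintype.card_fin]
  obtain rfl : R = fun Z => 𝔼 i, Z i + D Z := funext fun Z => by rw [hR, hmean]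
  have hconvex : ConvexOn ℝ univ D := convexOn_iff_forall_pos.2 ⟨convex_univ,
    fun Z _ Z' _ a b _ hb hab => by
      obtain rfl : a = 1 - b := by linarith
      exact F1 Z Z' b hb (by linarith)⟩
  simp only [hmean]
  exact ⟨deviation_le_iSup_sub_expect_of_monotone fun c => (F9b _).2 ⟨c, fun _ => rfl⟩,
    monotone_expect_add_of_deviation_le hconvex⟩

/-- for a regular measure of deviation `D` and `R(Z) := E(Z) + D(Z)`,
`R` is monotonic iff `D(Z) ≤ max_i Z i − E(Z)` for every `Z`. -/
theorem risk_monotone_iff_deviation_bounded (n : ℕ) (hn : 1 ≤ n)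
    (D : (Fin n → ℝ) → ℝ)
    (F1 : ∀ Z Z' : Fin n → ℝ, ∀ l : ℝ, 0 < l → l < 1 →
      D ((1 - l) • Z + l • Z') ≤ (1 - l) * D Z + l * D Z')
    (F4 : LowerSemicontinuous D)
    (F9a : ∀ Z : Fin n → ℝ, 0 ≤ D Z)
    (F9b : ∀ Z : Fin n → ℝ, D Z = 0 ↔ ∃ c : ℝ, ∀ i, Z i = c)
    (R : (Fin n → ℝ) → ℝ)
    (hR : ∀ Z : Fin n → ℝ, R Z = (∑ i, Z i) / n + D Z) :
    (∀ Z Z' : Fin n → ℝ, (∀ i, Z i ≤ Z' i) → R Z ≤ R Z') ↔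
    (∀ Z : Fin n → ℝ, D Z ≤ (⨆ i, Z i) - (∑ i, Z i) / n) :=
  risk_monotone_iff_deviation_bounded_general n hn D F1 F9b R hR
end

section
/- Let m ≥ 1, let z : Fin m → ℝ, and let k be an integer with 1 ≤ k ≤ m. Define T_k(z) as the maximum over subsets s ⊆ Fin m with cardinality k of ∑_{i∈s} z i (the sum of the k largest entries of z). Then T_k(z) is the least element of the set { k·ρ + ∑ᵢ max(z i − ρ, 0) : ρ ∈ ℝ }; in particular the minimum over ρ ∈ ℝ of k·ρ + ∑ᵢ max(z i − ρ, 0) exists and equals the sum of the k largest entries of z. -/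
/-!
Weak duality: on any `k`-subset `s`, `z i ≤ ρ + max (z i - ρ) 0`, so `∑_{i∈s} z i` is bounded by
`k ρ + ∑ᵢ max (z i - ρ) 0` for every `ρ`. For a maximising `s`, exchanging one element shows that
every entry outside `s` is at most every entry inside, so some threshold `ρ` separates `s` from
its complement; for that `ρ` the positive parts vanish exactly off `s` and the bound is attained.
-/

open Finset

variable {ι : Type*} (z : ι → ℝ)

theorem sum_le_card_mul_add_sum_max_sub [Fintype ι] (s : Finset ι) (ρ : ℝ) :
    ∑ i ∈ s, z i ≤ #s * ρ + ∑ i, max (z i - ρ) 0 :=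
  calc ∑ i ∈ s, z i ≤ ∑ i ∈ s, (ρ + max (z i - ρ) 0) :=
        sum_le_sum fun i _ => by linarith [le_max_left (z i - ρ) 0]
    _ = #s * ρ + ∑ i ∈ s, max (z i - ρ) 0 := by simp [sum_add_distrib]
    _ ≤ #s * ρ + ∑ i, max (z i - ρ) 0 := by
        gcongr _ + ?_
        exact sum_le_sum_of_subset_of_nonneg (subset_univ s) fun i _ _ => le_max_right (z i - ρ) 0

theorem card_mul_add_sum_max_sub_eq_sum [Fintype ι] {s : Finset ι} {ρ : ℝ}
    (hin : ∀ i ∈ s, ρ ≤ z i) (hout : ∀ j ∉ s, z j ≤ ρ) :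
    #s * ρ + ∑ i, max (z i - ρ) 0 = ∑ i ∈ s, z i := by
  have hpos : ∑ i, max (z i - ρ) 0 = ∑ i ∈ s, (z i - ρ) := by
    rw [← sum_subset (subset_univ s) fun j _ hj => max_eq_right (sub_nonpos.2 (hout j hj))]
    exact sum_congr rfl fun i hi => max_eq_left (sub_nonneg.2 (hin i hi))
  rw [hpos, sum_sub_distrib, sum_const, nsmul_eq_mul]
  ring

theorem le_of_forall_card_eq_sum_le [DecidableEq ι] {s : Finset ι}
    (hs : ∀ t : Finset ι, #t = #s → ∑ i ∈ t, z i ≤ ∑ i ∈ s, z i)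
    {i j : ι} (hi : i ∈ s) (hj : j ∉ s) : z j ≤ z i := by
  have hj' : j ∉ s.erase i := fun h => hj (mem_of_mem_erase h)
  have hcard : #(insert j (s.erase i)) = #s := by
    rw [card_insert_of_notMem hj', card_erase_add_one hi]
  have := hs _ hcard
  rw [sum_insert hj', sum_erase_eq_sub hi] at this
  linarith

theorem exists_separating_threshold [Finite ι] {s : Finset ι}
    (h : ∀ i ∈ s, ∀ j ∉ s, z j ≤ z i) :
    ∃ ρ, (∀ i ∈ s, ρ ≤ z i) ∧ ∀ j ∉ s, z j ≤ ρ := by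
  rcases s.eq_empty_or_nonempty with rfl | hs
  · exact ⟨⨆ j, z j, by simp, fun j _ => le_ciSup (Finite.bddAbove_range z) j⟩
  · obtain ⟨i, hi, hmin⟩ := exists_mem_eq_inf' hs z
    exact ⟨s.inf' hs z, fun i' hi' => inf'_le z hi', fun j hj => hmin ▸ h i hi j hj⟩

/-- variational representation of the sum of the `k` largest entries:
the maximum over subsets `s` of cardinality `k` of `∑_{i∈s} z i` is the least
element of `{ k·ρ + ∑ᵢ max(z i − ρ, 0) : ρ ∈ ℝ }`. -/
theorem topK_variational (m : ℕ) (z : Fin m → ℝ)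
    (k : ℕ) (hkm : k ≤ m) :
    IsLeast {y : ℝ | ∃ ρ : ℝ, y = k * ρ + ∑ i, max (z i - ρ) 0}
      (((Finset.univ : Finset (Fin m)).powersetCard k).sup'
        (Finset.powersetCard_nonempty.mpr (by simpa using hkm))
        (fun s => ∑ i ∈ s, z i)) := by
  obtain ⟨s, hs, hs_eq⟩ := exists_mem_eq_sup'
    (powersetCard_nonempty.mpr (by simpa using hkm : k ≤ #(univ : Finset (Fin m))))
    fun s => ∑ i ∈ s, z i
  have hcard : #s = k := (mem_powersetCard.1 hs).2
  have hmax : ∀ t : Finset (Fin m), #t = #s → ∑ i ∈ t, z i ≤ ∑ i ∈ s, z i := fun t ht =>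
    hs_eq ▸ le_sup' (fun s => ∑ i ∈ s, z i) (mem_powersetCard.2 ⟨subset_univ t, ht.trans hcard⟩)
  obtain ⟨ρ, hin, hout⟩ := exists_separating_threshold z
    fun i hi j hj => le_of_forall_card_eq_sum_le z hmax hi hj
  refine ⟨⟨ρ, ?_⟩, ?_⟩
  · rw [hs_eq, ← hcard, card_mul_add_sum_max_sub_eq_sum z hin hout]
  · rintro y ⟨ρ', rfl⟩
    exact sup'_le _ _ fun t ht =>
      (mem_powersetCard.1 ht).2 ▸ sum_le_card_mul_add_sum_max_sub z t ρ'
end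

section
/- Let n ≥ 1 and z : Fin n → ℝ. Then the mean (1/n)·∑ᵢ z i is the least element of the set { ρ + (1/n)·∑ᵢ max(z i − ρ, 0) : ρ ∈ ℝ }; in particular min over ρ ∈ ℝ of ρ + (1/n)·∑ᵢ max(z i − ρ, 0) exists and equals the mean of z, and the minimum is attained at every ρ with ρ ≤ minᵢ z i. -/
/-- the mean of `z` is the least element of
`{ ρ + (1/n)·∑ᵢ max(z i − ρ, 0) : ρ ∈ ℝ }`, and the minimum is attained at every
`ρ ≤ minᵢ z i`. -/
theorem mean_variational (n : ℕ) (hn : 1 ≤ n) (z : Fin n → ℝ) :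
    IsLeast {y : ℝ | ∃ ρ : ℝ, y = ρ + (1 / n) * ∑ i, max (z i - ρ) 0}
      ((1 / n) * ∑ i, z i) ∧
    ∀ ρ : ℝ, ρ ≤ (⨅ i, z i) →
      ρ + (1 / n) * ∑ i, max (z i - ρ) 0 = (1 / n) * ∑ i, z i := by
  have hnpos : (0:ℝ) < n := by exact_mod_cast Nat.lt_of_lt_of_le Nat.zero_lt_one hn
  haveI : Nonempty (Fin n) := ⟨⟨0, hn⟩⟩
  have key : ∀ ρ : ℝ, (∀ i, ρ ≤ z i) →
      ρ + (1 / n) * ∑ i, max (z i - ρ) 0 = (1 / n) * ∑ i, z i := by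
    intro ρ hρ
    have : ∀ i, max (z i - ρ) 0 = z i - ρ := fun i =>
      max_eq_left (by linarith [hρ i])
    simp only [this, Finset.sum_sub_distrib, Finset.sum_const, Finset.card_univ,
      Fintype.card_fin, nsmul_eq_mul]
    field_simp
    ring
  refine ⟨⟨?_, ?_⟩, fun ρ hρ => key ρ (fun i => hρ.trans (ciInf_le (Finite.bddBelow_range z) i))⟩
  · exact ⟨⨅ i, z i, (key _ (fun i => ciInf_le (Finite.bddBelow_range z) i)).symm⟩
  · rintro y ⟨ρ, rfl⟩
    have h1 : ∑ i, (z i - ρ) ≤ ∑ i, max (z i - ρ) 0 :=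
      Finset.sum_le_sum fun i _ => le_max_left _ _
    have h2 : ∑ i, (z i - ρ) = ∑ i, z i - n * ρ := by
      simp [Finset.sum_sub_distrib, Finset.card_univ, mul_comm]
    have : (1/n) * (∑ i, z i - n * ρ) ≤ (1/n) * ∑ i, max (z i - ρ) 0 := by
      apply mul_le_mul_of_nonneg_left (h2 ▸ h1) (by positivity)
    have he : (1/n) * ((n:ℝ) * ρ) = ρ := by field_simp
    nlinarith [this, he]
end

section
/- Let n ≥ 1 and z : Fin n → ℝ, and for α ∈ (0,1) define C(α) := inf over ρ ∈ ℝ of ( ρ + (1/(1−α))·(1/n)·∑ᵢ max(z i − ρ, 0) ). Then C(α) tends to maxᵢ z i as α tends to 1 from the left. -/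
/-- the CVaR `C(α) = inf_ρ { ρ + (1/(1−α))·(1/n)·∑ᵢ max(z i − ρ, 0) }`
tends to `maxᵢ z i` as `α → 1⁻`. -/
theorem cvar_tendsto_max (n : ℕ) (hn : 1 ≤ n) (z : Fin n → ℝ) :
    Filter.Tendsto
      (fun α : ℝ =>
        sInf {y : ℝ | ∃ ρ : ℝ, y = ρ + (1 / (1 - α)) * ((1 / n) * ∑ i, max (z i - ρ) 0)})
      (nhdsWithin 1 (Set.Iio 1)) (nhds (⨆ i, z i)) := by
  have hne : Nonempty (Fin n) := ⟨⟨0, hn⟩⟩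
  obtain ⟨i₀, hi₀⟩ := Finite.exists_max z
  have hM : (⨆ i, z i) = z i₀ :=
    le_antisymm (ciSup_le hi₀) (le_ciSup (Set.Finite.bddAbove (Set.finite_range z)) i₀)
  have hnpos : (0:ℝ) < n := by exact_mod_cast hn
  apply Filter.Tendsto.congr' _ tendsto_const_nhds
  have hmem : Set.Ioo (1 - 1/(n:ℝ)) 1 ∈ nhdsWithin 1 (Set.Iio 1) := by
    rw [show Set.Ioo (1 - 1/(n:ℝ)) 1 = Set.Ioi (1 - 1/(n:ℝ)) ∩ Set.Iio 1 from rfl]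
    exact Filter.inter_mem
      (nhdsWithin_le_nhds (Ioi_mem_nhds (by
        have : 0 < 1/(n:ℝ) := by positivity
        linarith)))
      self_mem_nhdsWithin
  filter_upwards [hmem] with α hα
  have h1 : 0 < 1 - α := by linarith [hα.2]
  set c := 1/(1-α) with hc_def
  have hc : (n:ℝ) ≤ c := by
    rw [hc_def, le_div_iff₀ h1]
    have h2 : 1 - α < 1/(n:ℝ) := by linarith [hα.1]
    have := mul_lt_mul_of_pos_left h2 hnpos
    rw [mul_one_div, div_self hnpos.ne'] at this
    linarith
  have hch : 1 ≤ c * (1/(n:ℝ)) := by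
    rw [mul_one_div, le_div_iff₀ hnpos]
    linarith
  -- lower bound for every element of the set
  have hlb : ∀ y ∈ {y : ℝ | ∃ ρ : ℝ, y = ρ + c * ((1/(n:ℝ)) * ∑ i, max (z i - ρ) 0)},
      z i₀ ≤ y := by
    rintro y ⟨ρ, rfl⟩
    set s := ∑ i, max (z i - ρ) 0 with hs_def
    have hs0 : 0 ≤ s := Finset.sum_nonneg fun i _ => le_max_right _ _
    have hm : max (z i₀ - ρ) 0 ≤ s :=
      Finset.single_le_sum (f := fun i => max (z i - ρ) 0) (fun i _ => le_max_right _ _) (Finset.mem_univ i₀)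
    have hss : s ≤ c * ((1/(n:ℝ)) * s) := by
      rw [← mul_assoc]
      exact le_mul_of_one_le_left hs0 hch
    have := le_max_left (z i₀ - ρ) 0
    linarith
  -- the element at ρ = z i₀ equals z i₀
  have hmem0 : z i₀ ∈ {y : ℝ | ∃ ρ : ℝ, y = ρ + c * ((1/(n:ℝ)) * ∑ i, max (z i - ρ) 0)} := by
    refine ⟨z i₀, ?_⟩
    have : ∑ i, max (z i - z i₀) 0 = 0 :=
      Finset.sum_eq_zero fun i _ => max_eq_right (by linarith [hi₀ i])
    rw [this]
    ring
  have : sInf {y : ℝ | ∃ ρ : ℝ, y = ρ + c * ((1/(n:ℝ)) * ∑ i, max (z i - ρ) 0)} = z i₀ :=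
    le_antisymm (csInf_le ⟨z i₀, hlb⟩ hmem0) (le_csInf ⟨_, hmem0⟩ hlb)
  rw [hM]
  exact this.symm
end

section
/- Let n ≥ 1 and let R : (Fin n → ℝ) → ℝ satisfy: E(x) ≤ R(x) for every x with x i ≥ 0 for all i, and translation invariance R(x + c·1) = R(x) + c for all x and all c ∈ ℝ. Then for every x with x i ≥ 0 for all i and E(x) > 0, and every c > 0, one has R(x + c·1)/E(x + c·1) − 1 ≤ R(x)/E(x) − 1; that is, the induced inequality measure I_R satisfies the constant-addition axiom I6: adding the same positive amount to every coordinate does not increase inequality. -/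
/-- if `R` dominates the mean on nonnegative vectors and is
translation invariant, then the induced inequality measure `I_R(x) = R(x)/E(x) − 1`
satisfies constant addition (I6): adding a positive constant to every coordinate
does not increase inequality. -/
theorem constant_addition (n : ℕ) (hn : 1 ≤ n) (R : (Fin n → ℝ) → ℝ)
    (hE : ∀ x : Fin n → ℝ, (∀ i, 0 ≤ x i) → (∑ i, x i) / n ≤ R x)
    (htrans : ∀ x : Fin n → ℝ, ∀ c : ℝ, R (fun i => x i + c) = R x + c) :
    ∀ x : Fin n → ℝ, (∀ i, 0 ≤ x i) → 0 < (∑ i, x i) / n →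
    ∀ c : ℝ, 0 < c →
      R (fun i => x i + c) / ((∑ i, (x i + c)) / n) - 1 ≤
        R x / ((∑ i, x i) / n) - 1 := by
  intro x hx hEpos c hc
  have hn0 : (0:ℝ) < n := by exact_mod_cast hn
  have hsum : (∑ i, (x i + c)) / n = (∑ i, x i) / n + c := by
    rw [Finset.sum_add_distrib, Finset.sum_const, Finset.card_univ, Fintype.card_fin]
    field_simp
    ring
  rw [hsum, htrans]
  set E := (∑ i, x i) / n with hEdef
  have hRE : E ≤ R x := hE x hx
  have h1 : 0 < E + c := by linarith
  rw [sub_le_sub_iff_right, div_le_div_iff₀ h1 hEpos]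
  nlinarith
end
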